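/- arXiv:2008.08253 — 2 statements merged into one kernel-verified Lean document; each statement's English description precedes it below -/
import Mathlib

section
/- For n ≥ 5, the maximum of N(0,2;λ) := ∏_j N(0,2;λ_j) over all partitions λ = (λ_1,…,λ_k) of n equals 3^{n/3} if n ≡ 0 (mod 3), equals 11·3^{(n−7)/3} if n ≡ 1 (mod 3), and equals 5·3^{(n−5)/3} if n ≡ 2 (mod 3). -/
/-- The rank of a partition: largest part minus number of parts. -/
def partitionRank {n : ℕ} (p : n.Partition) : ℤ :=
  (p.parts.sup : ℤ) - p.parts.card

/-- `N r n` = number of partitions of `n` with rank ≡ r (mod 2). -/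
def N (r n : ℕ) : ℕ :=
  Fintype.card {p : n.Partition // partitionRank p % 2 = (r : ℤ)}

/-- `N(r,2;λ) = ∏_j N(r,2;λ_j)` over the parts of a partition `λ`. -/
def Nprod (r : ℕ) {n : ℕ} (p : n.Partition) : ℕ :=
  (p.parts.map (N r)).prod

/-- `maxN(r,2;n)`: the maximal value of `N(r,2;λ)` over partitions `λ` of `n`. -/
def maxN (r n : ℕ) : ℕ :=
  Finset.univ.sup fun p : n.Partition => Nprod r p

/-!
Let `G = maxNRec`: `G n = 1, 1, 1, 3, 3, 5, 9, 11` for `n ≤ 7` and `G (n + 3) = 3 G n` for `n ≥ 5`.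
It is supermultiplicative, so `maxN 0 n ≤ G n` reduces to `N(0,2;a) ≤ G a` for a single part `a`.
For `a < 33` this is a finite computation: `p(a)` minus a list of explicit odd-rank partitions.
For `a ≥ 33` already `p(a) ≤ G a`: with `q = numPartitionsGe` (parts `≥ k`), the inequality
`q(k, n + k) ≤ q(k, n) + q(k + 1, n + k)` peels off the parts `1, …, 4`, and `q(5, n)` is bounded
by `F = slowFib`, `F n = F (n - 1) + F (n - 5)`, which grows like `1.3247ⁿ < 3^(n/3)`; this gives
`p ≤ 29 F ≤ G`.
Conversely `3 + 3 + ⋯ + 3`, with one part `5` or `7` when `3 ∤ n`, attains `G n`, since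
`N(0,2;3) = 3`, `N(0,2;5) = 5` and `N(0,2;7) = 11`.
-/

def maxNRec : ℕ → ℕ
  | 0 => 1 | 1 => 1 | 2 => 1 | 3 => 3 | 4 => 3 | 5 => 5 | 6 => 9 | 7 => 11
  | n + 8 => 3 * maxNRec (n + 5)

lemma maxNRec_add_three {n : ℕ} (hn : 5 ≤ n) : maxNRec (n + 3) = 3 * maxNRec n := by
  obtain ⟨m, rfl⟩ := Nat.exists_eq_add_of_le' hn
  rfl

lemma maxNRec_add_three_mul {c : ℕ} (hc : 5 ≤ c) (k : ℕ) :
    maxNRec (c + 3 * k) = 3 ^ k * maxNRec c := by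
  induction k with
  | zero => simp
  | succ k ih =>
    rw [show c + 3 * (k + 1) = c + 3 * k + 3 by ring, maxNRec_add_three (by omega), ih]
    ring

lemma maxNRec_mul_le_of_lt {a : ℕ} (ha : a < 8) (b : ℕ) :
    maxNRec a * maxNRec b ≤ maxNRec (a + b) := by
  induction b using Nat.strong_induction_on with
  | _ b ih =>
    by_cases hb : b < 8
    · have : ∀ a < 8, ∀ b < 8, maxNRec a * maxNRec b ≤ maxNRec (a + b) := by decide
      exact this a ha b hb
    · obtain ⟨b, rfl⟩ := Nat.exists_eq_add_of_le' (show 3 ≤ b by omega)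
      rw [maxNRec_add_three (by omega), ← add_assoc, maxNRec_add_three (by omega),
        mul_left_comm]
      exact Nat.mul_le_mul_left 3 (ih b (by omega))

lemma maxNRec_mul_le (a b : ℕ) : maxNRec a * maxNRec b ≤ maxNRec (a + b) := by
  induction a using Nat.strong_induction_on with
  | _ a ih =>
    by_cases ha : a < 8
    · exact maxNRec_mul_le_of_lt ha b
    · obtain ⟨a, rfl⟩ := Nat.exists_eq_add_of_le' (show 3 ≤ a by omega)
      rw [maxNRec_add_three (by omega), add_right_comm, maxNRec_add_three (by omega), mul_assoc]
      exact Nat.mul_le_mul_left 3 (ih a (by omega))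

lemma maxNRec_add_four_add_le {n : ℕ} (hn : 3 ≤ n) :
    maxNRec (n + 4) + maxNRec n ≤ maxNRec (n + 5) := by
  induction n using Nat.strong_induction_on with
  | _ n ih =>
    by_cases h : n < 8
    · have : ∀ n < 8, 3 ≤ n → maxNRec (n + 4) + maxNRec n ≤ maxNRec (n + 5) := by decide
      exact this n h hn
    · obtain ⟨m, rfl⟩ := Nat.exists_eq_add_of_le' (show 3 ≤ n by omega)
      have := ih m (by omega) (by omega)
      have e4 : maxNRec (m + 3 + 4) = 3 * maxNRec (m + 4) := maxNRec_add_three (by omega)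
      have e5 : maxNRec (m + 3 + 5) = 3 * maxNRec (m + 5) := maxNRec_add_three (by omega)
      rw [e4, e5, maxNRec_add_three (n := m) (by omega)]
      omega

lemma maxNRec_eq_of_mod_three {n : ℕ} (hn : 5 ≤ n) :
    (n % 3 = 0 → maxNRec n = 3 ^ (n / 3)) ∧
    (n % 3 = 1 → maxNRec n = 11 * 3 ^ ((n - 7) / 3)) ∧
    (n % 3 = 2 → maxNRec n = 5 * 3 ^ ((n - 5) / 3)) := by
  refine ⟨fun h => ?_, fun h => ?_, fun h => ?_⟩
  · obtain ⟨k, rfl⟩ : ∃ k, n = 6 + 3 * k := ⟨n / 3 - 2, by omega⟩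
    rw [maxNRec_add_three_mul (by norm_num), show (6 + 3 * k) / 3 = k + 2 by omega]
    norm_num [maxNRec, pow_add]
  · obtain ⟨k, rfl⟩ : ∃ k, n = 7 + 3 * k := ⟨(n - 7) / 3, by omega⟩
    rw [maxNRec_add_three_mul (by norm_num), show (7 + 3 * k - 7) / 3 = k by omega]
    norm_num [maxNRec, mul_comm]
  · obtain ⟨k, rfl⟩ : ∃ k, n = 5 + 3 * k := ⟨(n - 5) / 3, by omega⟩
    rw [maxNRec_add_three_mul (by norm_num), show (5 + 3 * k - 5) / 3 = k by omega]
    norm_num [maxNRec, mul_comm]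

def slowFib : ℕ → ℕ
  | 0 | 1 | 2 | 3 | 4 => 1
  | n + 5 => slowFib (n + 4) + slowFib n

lemma mul_slowFib_add_le_of_initial {A B C k m : ℕ}
    (h : ∀ i < 5, A * slowFib (m + i) + B * slowFib (m + i + k) ≤ C * slowFib (m + i + k)) :
    ∀ n, m ≤ n → A * slowFib n + B * slowFib (n + k) ≤ C * slowFib (n + k) := by
  intro n
  induction n using Nat.strong_induction_on with
  | _ n ih =>
    intro hn
    by_cases h5 : n < m + 5
    · simpa [Nat.add_sub_cancel' hn] using h (n - m) (by omega)
    · obtain ⟨j, rfl⟩ := Nat.exists_eq_add_of_le' (show 5 ≤ n by omega)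
      have h4 := ih (j + 4) (by omega) (by omega)
      have h0 := ih j (by omega) (by omega)
      rw [show j + 5 + k = j + k + 5 by ring, slowFib, slowFib, show j + k + 4 = j + 4 + k by ring]
      linarith

lemma mul_slowFib_le_maxNRec {n : ℕ} (hn : 33 ≤ n) : 29 * slowFib n ≤ maxNRec n := by
  induction n using Nat.strong_induction_on with
  | _ n ih =>
    by_cases h : n < 38
    · have : ∀ n < 38, 33 ≤ n → 29 * slowFib n ≤ maxNRec n := by decide
      exact this n h hn
    · obtain ⟨j, rfl⟩ := Nat.exists_eq_add_of_le' (show 5 ≤ n by omega)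
      have := maxNRec_add_four_add_le (show 3 ≤ j by omega)
      have h4 := ih (j + 4) (by omega) (by omega)
      have h0 := ih j (by omega) (by omega)
      rw [slowFib]
      omega

lemma le_mul_of_step {a b F : ℕ → ℕ} {k m A B : ℕ} (hk : 0 < k)
    (hstep : ∀ n, a (n + k) ≤ a n + b (n + k)) (hb : ∀ n, b n ≤ B * F n)
    (hF : ∀ n, m ≤ n → A * F n + B * F (n + k) ≤ A * F (n + k))
    (hsmall : ∀ n < m + k, a n ≤ A * F n) (n : ℕ) : a n ≤ A * F n := by
  induction n using Nat.strong_induction_on with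
  | _ n ih =>
    by_cases hn : n < m + k
    · exact hsmall n hn
    obtain ⟨j, rfl⟩ := Nat.exists_eq_add_of_le' (show k ≤ n by omega)
    calc a (j + k) ≤ a j + b (j + k) := hstep j
      _ ≤ A * F j + B * F (j + k) := add_le_add (ih j (by omega)) (hb _)
      _ ≤ A * F (j + k) := hF j (by omega)

namespace Nat.Partition

variable {n : ℕ}

lemma parts_ne_zero (hn : n ≠ 0) (p : n.Partition) : p.parts ≠ 0 := fun h =>
  hn (by rw [← p.parts_sum, h, Multiset.sum_zero])

def erasePart {a : ℕ} (p : (n + a).Partition) (ha : a ∈ p.parts) : n.Partition where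
  parts := p.parts.erase a
  parts_pos hi := p.parts_pos (Multiset.mem_of_mem_erase hi)
  parts_sum := by
    have := congrArg Multiset.sum (Multiset.cons_erase ha)
    rw [Multiset.sum_cons, p.parts_sum] at this
    omega

lemma cons_erasePart {a : ℕ} (p : (n + a).Partition) (ha : a ∈ p.parts) :
    a ::ₘ (p.erasePart ha).parts = p.parts :=
  Multiset.cons_erase ha

def minPart (hn : n ≠ 0) (p : n.Partition) : ℕ :=
  p.parts.toFinset.min' (Multiset.toFinset_nonempty.2 (p.parts_ne_zero hn))

lemma minPart_mem (hn : n ≠ 0) (p : n.Partition) : p.minPart hn ∈ p.parts :=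
  Multiset.mem_toFinset.1 (Finset.min'_mem _ _)

lemma minPart_le (hn : n ≠ 0) (p : n.Partition) {i : ℕ} (hi : i ∈ p.parts) :
    p.minPart hn ≤ i :=
  Finset.min'_le _ _ (Multiset.mem_toFinset.2 hi)

def decMinPart (hn : n ≠ 0) (p : n.Partition) (hp : 2 ≤ p.minPart hn) : (n - 1).Partition where
  parts := (p.minPart hn - 1) ::ₘ p.parts.erase (p.minPart hn)
  parts_pos hi := by
    rcases Multiset.mem_cons.1 hi with rfl | hi
    · omega
    · exact p.parts_pos (Multiset.mem_of_mem_erase hi)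
  parts_sum := by
    have := congrArg Multiset.sum (Multiset.cons_erase (p.minPart_mem hn))
    rw [Multiset.sum_cons, p.parts_sum] at this
    rw [Multiset.sum_cons]
    omega

lemma minPart_sub_one_le_of_mem_decMinPart (hn : n ≠ 0) (p : n.Partition)
    (hp : 2 ≤ p.minPart hn) {i : ℕ} (hi : i ∈ (p.decMinPart hn hp).parts) :
    p.minPart hn - 1 ≤ i := by
  rcases Multiset.mem_cons.1 hi with rfl | hi
  · rfl
  · exact (p.minPart_le hn (Multiset.mem_of_mem_erase hi)).trans' (Nat.sub_le _ _)

lemma decMinPart_injective (hn : n ≠ 0) {p p' : n.Partition} (hp : 2 ≤ p.minPart hn)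
    (hp' : 2 ≤ p'.minPart hn) (h : p.decMinPart hn hp = p'.decMinPart hn hp') : p = p' := by
  have h := congrArg parts h
  have hle : p.minPart hn - 1 ∈ (p.decMinPart hn hp).parts := Multiset.mem_cons_self _ _
  have hge : p'.minPart hn - 1 ∈ (p'.decMinPart hn hp').parts := Multiset.mem_cons_self _ _
  rw [h] at hle
  rw [← h] at hge
  replace hle := p'.minPart_sub_one_le_of_mem_decMinPart hn hp' hle
  replace hge := p.minPart_sub_one_le_of_mem_decMinPart hn hp hge
  have hm : p.minPart hn = p'.minPart hn := by omega
  simp only [decMinPart, hm, Multiset.cons_inj_right] at h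
  ext1
  rw [← Multiset.cons_erase (p.minPart_mem hn), ← Multiset.cons_erase (p'.minPart_mem hn), hm, h]

def append {m n : ℕ} (p : m.Partition) (q : n.Partition) : (m + n).Partition where
  parts := p.parts + q.parts
  parts_pos hi := (Multiset.mem_add.1 hi).elim p.parts_pos q.parts_pos
  parts_sum := by rw [Multiset.sum_add, p.parts_sum, q.parts_sum]

end Nat.Partition

def numPartitionsGe (k n : ℕ) : ℕ :=
  Fintype.card {p : n.Partition // ∀ i ∈ p.parts, k ≤ i}

/-- The recursion behind `numPartitionsGe.le_add`, run on a fuel `f` so that the kernel can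
evaluate it; `f = 2n + 2` suffices. -/
def numPartitionsGeRec : ℕ → ℕ → ℕ → ℕ
  | 0, _, n => if n = 0 then 1 else 0
  | f + 1, k, n => if n = 0 then 1 else if n < k then 0 else if n < 2 * k then 1
      else numPartitionsGeRec f k (n - k) + numPartitionsGeRec f (k + 1) n

namespace numPartitionsGe

lemma zero_right (k : ℕ) : numPartitionsGe k 0 = 1 :=
  Fintype.card_eq_one_iff.2 ⟨⟨default, by simp⟩, fun _ => Subtype.ext (Subsingleton.elim _ _)⟩

lemma one_left (n : ℕ) : numPartitionsGe 1 n = Fintype.card n.Partition :=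
  Fintype.card_congr (Equiv.subtypeUnivEquiv fun p _ hi => p.parts_pos hi)

lemma eq_zero {k n : ℕ} (hn : n ≠ 0) (hk : n < k) : numPartitionsGe k n = 0 := by
  rw [numPartitionsGe, Fintype.card_eq_zero_iff]
  refine ⟨fun ⟨p, hp⟩ => ?_⟩
  obtain ⟨i, hi⟩ := Multiset.exists_mem_of_ne_zero (p.parts_ne_zero hn)
  have := Nat.Partition.le_of_mem_parts hi
  exact absurd (hp i hi) (by omega)

lemma le_one {k n : ℕ} (hk : n < 2 * k) : numPartitionsGe k n ≤ 1 := by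
  rcases eq_or_ne n 0 with rfl | hn
  · exact (zero_right k).le
  suffices key : ∀ q : n.Partition, (∀ i ∈ q.parts, k ≤ i) → q.parts = {n} from
    Fintype.card_le_one_iff.2 fun ⟨p, hp⟩ ⟨p', hp'⟩ =>
      Subtype.ext (Nat.Partition.ext ((key p hp).trans (key p' hp').symm))
  intro q hq
  have hsum : q.parts.card • k ≤ n := (Multiset.card_nsmul_le_sum hq).trans_eq q.parts_sum
  rw [smul_eq_mul] at hsum
  have hpos := Multiset.card_pos.2 (q.parts_ne_zero hn)
  obtain ⟨a, ha⟩ := Multiset.card_eq_one.1 (show q.parts.card = 1 by nlinarith)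
  have := q.parts_sum
  rw [ha, Multiset.sum_singleton] at this
  rw [ha, this]

/-- Split according to whether `k` occurs as a part. -/
lemma le_add (k n : ℕ) :
    numPartitionsGe k (n + k) ≤ numPartitionsGe k n + numPartitionsGe (k + 1) (n + k) := by
  rw [numPartitionsGe, numPartitionsGe, numPartitionsGe, ← Fintype.card_sum]
  refine Fintype.card_le_of_injective (fun x =>
    if h : k ∈ x.1.parts then
      Sum.inl ⟨x.1.erasePart h, fun i hi => x.2 i (Multiset.mem_of_mem_erase hi)⟩
    else
      Sum.inr ⟨x.1, fun i hi => (x.2 i hi).lt_of_ne (fun e => h (e ▸ hi))⟩) ?_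
  rintro ⟨p, hp⟩ ⟨p', hp'⟩ he
  by_cases h : k ∈ p.parts <;> by_cases h' : k ∈ p'.parts <;>
    simp only [h, h', dite_true, dite_false, Sum.inl.injEq, Sum.inr.injEq, Subtype.mk.injEq,
      reduceCtorEq] at he
  · refine Subtype.ext (Nat.Partition.ext ?_)
    rw [← p.cons_erasePart h, ← p'.cons_erasePart h', he]
  · exact Subtype.ext he

lemma succ_le {k : ℕ} (hk : 1 ≤ k) (n : ℕ) :
    numPartitionsGe (k + 1) (n + 1) ≤ numPartitionsGe k n := by
  have hmin (x : {p : (n + 1).Partition // ∀ i ∈ p.parts, k + 1 ≤ i}) :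
      2 ≤ x.1.minPart n.succ_ne_zero := by
    have := x.2 _ (x.1.minPart_mem n.succ_ne_zero)
    omega
  refine Fintype.card_le_of_injective (fun x => ⟨x.1.decMinPart n.succ_ne_zero (hmin x),
    fun i hi => ?_⟩) fun x x' h => Subtype.ext (Nat.Partition.decMinPart_injective _ (hmin x)
      (hmin x') (congrArg Subtype.val h))
  have := x.1.minPart_sub_one_le_of_mem_decMinPart n.succ_ne_zero (hmin x) hi
  have := x.2 _ (x.1.minPart_mem n.succ_ne_zero)
  omega


lemma le_rec (f : ℕ) : ∀ {k n : ℕ}, 1 ≤ k → 2 * n + 2 ≤ f + k →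
    numPartitionsGe k n ≤ numPartitionsGeRec f k n := by
  induction f with
  | zero =>
    intro k n _ h
    rcases eq_or_ne n 0 with rfl | hn
    · simp [zero_right, numPartitionsGeRec]
    · simp [eq_zero hn (by omega : n < k)]
  | succ f ih =>
    intro k n hk h
    rcases eq_or_ne n 0 with rfl | hn
    · simp [zero_right, numPartitionsGeRec]
    by_cases h1 : n < k
    · simp [eq_zero hn h1]
    by_cases h2 : n < 2 * k
    · simpa [numPartitionsGeRec, hn, h1, h2] using le_one h2
    · obtain ⟨m, rfl⟩ := Nat.exists_eq_add_of_le' (not_lt.1 h1)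
      simp only [numPartitionsGeRec, hn, h1, h2, if_false, Nat.add_sub_cancel]
      exact (le_add k m).trans (add_le_add (ih hk (by omega)) (ih (by omega) (by omega)))

lemma mul_le_of_rec {c d k n : ℕ} (hk : 1 ≤ k) (h : c * numPartitionsGeRec (2 * n + 2) k n ≤ d) :
    c * numPartitionsGe k n ≤ d :=
  (Nat.mul_le_mul_left c (le_rec _ hk (by omega))).trans h

lemma five_le_slowFib (n : ℕ) : numPartitionsGe 5 n ≤ slowFib n := by
  induction n using Nat.strong_induction_on with
  | _ n ih =>
    rcases eq_or_ne n 0 with rfl | hn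
    · simp [zero_right, slowFib]
    by_cases h5 : n < 5
    · simp [eq_zero hn h5]
    obtain ⟨j, rfl⟩ := Nat.exists_eq_add_of_le' (not_lt.1 h5)
    calc numPartitionsGe 5 (j + 5)
        ≤ numPartitionsGe 5 j + numPartitionsGe 6 (j + 4 + 1) := le_add 5 j
      _ ≤ numPartitionsGe 5 j + numPartitionsGe 5 (j + 4) := by
        gcongr; exact succ_le (by norm_num) _
      _ ≤ slowFib (j + 5) := by rw [slowFib, add_comm]; gcongr <;> apply ih <;> omega

lemma two_mul_le_of_succ {k m A B : ℕ} (hk : 1 ≤ k)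
    (hsucc : ∀ n, 2 * numPartitionsGe (k + 1) n ≤ B * slowFib n)
    (hF : ∀ i < 5, A * slowFib (m + i) + B * slowFib (m + i + k) ≤ A * slowFib (m + i + k))
    (hsmall : ∀ n < m + k, 2 * numPartitionsGeRec (2 * n + 2) k n ≤ A * slowFib n) (n : ℕ) :
    2 * numPartitionsGe k n ≤ A * slowFib n :=
  le_mul_of_step (a := fun n => 2 * numPartitionsGe k n)
    (b := fun n => 2 * numPartitionsGe (k + 1) n) (F := slowFib) hk
    (fun n => (Nat.mul_le_mul_left 2 (le_add k n)).trans_eq (mul_add _ _ _)) hsucc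
    (mul_slowFib_add_le_of_initial hF) (fun n hn => mul_le_of_rec hk (hsmall n hn)) n

end numPartitionsGe

open numPartitionsGe in
lemma two_mul_card_partition_le (n : ℕ) : 2 * Fintype.card n.Partition ≤ 58 * slowFib n := by
  have h4 : ∀ n, 2 * numPartitionsGe 4 n ≤ 3 * slowFib n :=
    two_mul_le_of_succ (m := 8) (B := 2) (by norm_num)
      (fun n => Nat.mul_le_mul_left 2 (five_le_slowFib n)) (by decide) (by decide)
  have h3 : ∀ n, 2 * numPartitionsGe 3 n ≤ 6 * slowFib n :=
    two_mul_le_of_succ (m := 2) (by norm_num) h4 (by decide) (by decide)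
  have h2 : ∀ n, 2 * numPartitionsGe 2 n ≤ 14 * slowFib n :=
    two_mul_le_of_succ (m := 20) (by norm_num) h3 (by decide) (by decide)
  have h1 : ∀ n, 2 * numPartitionsGe 1 n ≤ 58 * slowFib n :=
    two_mul_le_of_succ (m := 15) (by norm_num) h2 (by decide) (by decide)
  exact one_left n ▸ h1 n

lemma card_partition_le_maxNRec {n : ℕ} (hn : 33 ≤ n) : Fintype.card n.Partition ≤ maxNRec n := by
  have := two_mul_card_partition_le n
  have := mul_slowFib_le_maxNRec hn
  omega

lemma N_zero_add_N_one_le (n : ℕ) : N 0 n + N 1 n ≤ Fintype.card n.Partition := by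
  rw [N, N, ← Fintype.card_subtype_or_disjoint]
  · exact Fintype.card_subtype_le _
  · simp only [Pi.disjoint_iff, Prop.disjoint_iff]
    omega

lemma length_le_N {r n : ℕ} {L : List (Multiset ℕ)} (hL : L.Nodup)
    (h : ∀ s ∈ L, (∀ i ∈ s, 0 < i) ∧ s.sum = n ∧ ((s.sup : ℤ) - Multiset.card s) % 2 = r) :
    L.length ≤ N r n := by
  have hs (i : Fin L.length) := h _ (L.get_mem i)
  rw [N]
  simpa using Fintype.card_le_of_injective
    (fun i => (⟨⟨L.get i, (hs i).1 _, (hs i).2.1⟩, (hs i).2.2⟩ :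
      {p : n.Partition // partitionRank p % 2 = r}))
    fun i j hij => hL.get_inj_iff.1 (congrArg (fun x => x.1.parts) hij)

def oddRankPartitions : ℕ → List (Multiset ℕ)
  | 2 => [{2}]
  | 4 => [{4}, {3, 1}]
  | 5 => [{3, 2}, {2, 2, 1}]
  | 6 => [{6}, {5, 1}]
  | 7 => [{5, 2}, {4, 2, 1}, {3, 2, 1, 1}, {2, 2, 1, 1, 1}]
  | 8 => [{8}, {7, 1}, {6, 1, 1}, {5, 3}, {5, 1, 1, 1}, {4, 3, 1}, {4, 2, 2}]
  | 9 => [{7, 2}, {6, 2, 1}, {5, 4}]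
  | 10 => [{10}, {9, 1}, {8, 1, 1}, {7, 3}, {7, 1, 1, 1}, {6, 3, 1}, {6, 2, 2}, {6, 1, 1, 1, 1},
      {5, 5}]
  | 11 => [{9, 2}, {8, 2, 1}, {7, 4}, {7, 2, 1, 1}, {6, 4, 1}, {6, 3, 2}, {6, 2, 1, 1, 1},
      {5, 4, 1, 1}, {5, 3, 2, 1}, {5, 2, 2, 2}, {5, 2, 1, 1, 1, 1}]
  | 13 => [{11, 2}, {10, 2, 1}]
  | _ => []

lemma three_le_N_zero_three : 3 ≤ N 0 3 :=
  length_le_N (L := [{3}, {2, 1}, {1, 1, 1}]) (by decide) (by decide)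

lemma five_le_N_zero_five : 5 ≤ N 0 5 :=
  length_le_N (L := [{5}, {4, 1}, {3, 1, 1}, {2, 1, 1, 1}, {1, 1, 1, 1, 1}]) (by decide) (by decide)

lemma eleven_le_N_zero_seven : 11 ≤ N 0 7 :=
  length_le_N (L := [{7}, {6, 1}, {5, 1, 1}, {4, 3}, {4, 1, 1, 1}, {3, 3, 1}, {3, 2, 2},
    {3, 1, 1, 1, 1}, {2, 2, 2, 1}, {2, 1, 1, 1, 1, 1}, {1, 1, 1, 1, 1, 1, 1}])
    (by decide) (by decide)

lemma N_zero_le_maxNRec_of_lt {a : ℕ} (ha : a < 33) : N 0 a ≤ maxNRec a := by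
  have hvalid : ∀ a < 33, (oddRankPartitions a).Nodup ∧ ∀ s ∈ oddRankPartitions a,
      (∀ i ∈ s, 0 < i) ∧ s.sum = a ∧ ((s.sup : ℤ) - Multiset.card s) % 2 = (1 : ℕ) := by
    decide +kernel
  have hcount : ∀ a < 33,
      numPartitionsGeRec (2 * a + 2) 1 a ≤ maxNRec a + (oddRankPartitions a).length := by
    decide +kernel
  have hodd := length_le_N (hvalid a ha).1 (hvalid a ha).2
  have hp := numPartitionsGe.one_left a ▸ numPartitionsGe.le_rec (2 * a + 2) le_rfl (by omega)
  have := N_zero_add_N_one_le a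
  have := hcount a ha
  omega

lemma N_zero_le_maxNRec (a : ℕ) : N 0 a ≤ maxNRec a := by
  by_cases ha : a < 33
  · exact N_zero_le_maxNRec_of_lt ha
  · have := N_zero_add_N_one_le a
    have := card_partition_le_maxNRec (not_lt.1 ha)
    omega

lemma Multiset.prod_map_le_of_le_of_mul_le {α : Type*} [AddCommMonoid α] {f G : α → ℕ}
    (hf : ∀ a, f a ≤ G a) (h0 : 1 ≤ G 0) (hG : ∀ a b, G a * G b ≤ G (a + b)) (s : Multiset α) :
    (s.map f).prod ≤ G s.sum := by
  induction s using Multiset.induction_on with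
  | empty => simpa using h0
  | cons a s ih =>
    rw [Multiset.map_cons, Multiset.prod_cons, Multiset.sum_cons]
    exact (Nat.mul_le_mul (hf a) ih).trans (hG _ _)

lemma maxN_zero_le_maxNRec (n : ℕ) : maxN 0 n ≤ maxNRec n :=
  Finset.sup_le fun p _ => (Multiset.prod_map_le_of_le_of_mul_le
    N_zero_le_maxNRec le_rfl maxNRec_mul_le p.parts).trans_eq (congrArg maxNRec p.parts_sum)

lemma Nprod_append (r : ℕ) {m n : ℕ} (p : m.Partition) (q : n.Partition) :
    Nprod r (p.append q) = Nprod r p * Nprod r q := by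
  simp [Nprod, Nat.Partition.append]

lemma Nprod_le_maxN (r : ℕ) {n : ℕ} (p : n.Partition) : Nprod r p ≤ maxN r n :=
  Finset.le_sup (Finset.mem_univ p)

lemma exists_Nprod_eq_maxN (r n : ℕ) : ∃ p : n.Partition, Nprod r p = maxN r n :=
  let ⟨p, _, hp⟩ := Finset.exists_mem_eq_sup _ Finset.univ_nonempty (Nprod r)
  ⟨p, hp.symm⟩

lemma maxN_mul_le_maxN_add (r a b : ℕ) : maxN r a * maxN r b ≤ maxN r (a + b) := by
  obtain ⟨p, hp⟩ := exists_Nprod_eq_maxN r a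
  obtain ⟨q, hq⟩ := exists_Nprod_eq_maxN r b
  rw [← hp, ← hq, ← Nprod_append]
  exact Nprod_le_maxN r _

lemma N_le_maxN (r : ℕ) {n : ℕ} (hn : n ≠ 0) : N r n ≤ maxN r n := by
  simpa [Nprod, hn] using Nprod_le_maxN r (Nat.Partition.indiscrete n)

lemma maxNRec_le_maxN {n : ℕ} (hn : 5 ≤ n) : maxNRec n ≤ maxN 0 n := by
  have h3 : 3 ≤ maxN 0 3 := three_le_N_zero_three.trans (N_le_maxN 0 (by norm_num))
  induction n using Nat.strong_induction_on with
  | _ n ih =>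
    by_cases h8 : n < 8
    · interval_cases n
      · exact five_le_N_zero_five.trans (N_le_maxN 0 (by norm_num))
      · exact (Nat.mul_le_mul h3 h3).trans (maxN_mul_le_maxN_add 0 3 3)
      · exact eleven_le_N_zero_seven.trans (N_le_maxN 0 (by norm_num))
    · obtain ⟨j, rfl⟩ := Nat.exists_eq_add_of_le' (show 3 ≤ n by omega)
      rw [maxNRec_add_three (by omega), add_comm]
      exact (Nat.mul_le_mul h3 (ih j (by omega) (by omega))).trans (maxN_mul_le_maxN_add 0 3 j)

lemma maxN_zero_eq_maxNRec {n : ℕ} (hn : 5 ≤ n) : maxN 0 n = maxNRec n :=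
  (maxN_zero_le_maxNRec n).antisymm (maxNRec_le_maxN hn)

theorem stmt10 (n : ℕ) (hn : 5 ≤ n) :
    (n % 3 = 0 → maxN 0 n = 3 ^ (n / 3)) ∧
    (n % 3 = 1 → maxN 0 n = 11 * 3 ^ ((n - 7) / 3)) ∧
    (n % 3 = 2 → maxN 0 n = 5 * 3 ^ ((n - 5) / 3)) := by
  rw [maxN_zero_eq_maxNRec hn]
  exact maxNRec_eq_of_mod_three hn
end

section
/- Define T_a(C) := l(a) + l(Ca) − l(a+Ca) and S_a(C) := (1 + 1/√(a+Ca)) / ((1 − 1/√a)(1 − 1/√(Ca))), where l(x) = π√(24x−1)/6. For fixed real a > 1, T_a is strictly increasing in C on [1,∞) and S_a is strictly decreasing in C on [1,∞). -/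
/-- `l(x) = π √(24x − 1)/6` -/
noncomputable def l (x : ℝ) : ℝ := Real.pi * Real.sqrt (24 * x - 1) / 6

/-- `T_a(C) = l(a) + l(Ca) − l(a + Ca)` -/
noncomputable def T (a C : ℝ) : ℝ := l a + l (C * a) - l (a + C * a)

/-- `S_a(C) = (1 + 1/√(a+Ca)) / ((1 − 1/√a)(1 − 1/√(Ca)))` -/
noncomputable def S (a C : ℝ) : ℝ :=
  (1 + 1 / Real.sqrt (a + C * a)) /
    ((1 - 1 / Real.sqrt a) * (1 - 1 / Real.sqrt (C * a)))

/-!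
Writing `l x - l (x + k)` as `π/6 · (√t - √(t + k))` with `t = 24x - 1`, and
`√t - √(t + k) = -k / (√t + √(t + k))`, shows that it increases with `x`; `T a C` is
`l a` plus this difference at `x = C a`, `k = a`. `S a C` is a positive decreasing numerator
over a positive increasing denominator, since `1 / √x` decreases and stays below `1` for `x > 1`.
-/

open Set Real

lemma sqrt_sub_sqrt_add_eq {t k : ℝ} (ht : 0 ≤ t) (hk : 0 < k) :
    √t - √(t + k) = -k / (√t + √(t + k)) := by
  have hsum : 0 < √t + √(t + k) := by positivity
  rw [eq_div_iff hsum.ne']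
  nlinarith [sq_sqrt ht, sq_sqrt (by linarith : 0 ≤ t + k)]

lemma strictMonoOn_sqrt_sub_sqrt_add {k : ℝ} (hk : 0 < k) :
    StrictMonoOn (fun t => √t - √(t + k)) (Ici 0) := by
  intro s (hs : 0 ≤ s) t (ht : 0 ≤ t) hst
  dsimp only
  rw [sqrt_sub_sqrt_add_eq hs hk, sqrt_sub_sqrt_add_eq ht hk, neg_div, neg_div, neg_lt_neg_iff]
  apply div_lt_div_of_pos_left hk (by positivity)
  exact add_lt_add (sqrt_lt_sqrt hs hst) (sqrt_lt_sqrt (by linarith) (by linarith))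

lemma l_sub_l_add (x k : ℝ) :
    l x - l (x + k) = π / 6 * (√(24 * x - 1) - √(24 * x - 1 + 24 * k)) := by
  rw [l, l, show 24 * (x + k) - 1 = 24 * x - 1 + 24 * k by ring]
  ring

lemma strictMonoOn_l_sub_l_add {k : ℝ} (hk : 0 < k) :
    StrictMonoOn (fun x => l x - l (x + k)) (Ici (1 / 24)) := by
  intro x (hx : 1 / 24 ≤ x) y (hy : 1 / 24 ≤ y) hxy
  dsimp only
  rw [l_sub_l_add, l_sub_l_add]
  refine mul_lt_mul_of_pos_left ?_ (by positivity)
  exact strictMonoOn_sqrt_sub_sqrt_add (by positivity) (mem_Ici.2 (by linarith))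
    (mem_Ici.2 (by linarith)) (by linarith)

lemma strictAntiOn_one_div_sqrt : StrictAntiOn (fun x => 1 / √x) (Ioi 0) :=
  fun _ hx _ _ hxy => one_div_lt_one_div_of_lt (sqrt_pos.2 hx) (sqrt_lt_sqrt (le_of_lt hx) hxy)

lemma one_sub_one_div_sqrt_pos {x : ℝ} (hx : 1 < x) : 0 < 1 - 1 / √x := by
  rw [sub_pos, div_lt_one (by positivity), lt_sqrt zero_le_one, one_pow]
  exact hx

lemma StrictAntiOn.div_of_strictMonoOn {s : Set ℝ} {f g : ℝ → ℝ} (hf : StrictAntiOn f s)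
    (hg : StrictMonoOn g s) (hf0 : ∀ x ∈ s, 0 < f x) (hg0 : ∀ x ∈ s, 0 < g x) :
    StrictAntiOn (fun x => f x / g x) s := by
  intro x hx y hy hxy
  calc f y / g y < f y / g x := div_lt_div_of_pos_left (hf0 y hy) (hg0 x hx) (hg hx hy hxy)
    _ < f x / g x := div_lt_div_of_pos_right (hf hx hy hxy) (hg0 x hx)

theorem stmt17 (a : ℝ) (ha : 1 < a) :
    StrictMonoOn (fun C => T a C) (Set.Ici (1 : ℝ)) ∧
    StrictAntiOn (fun C => S a C) (Set.Ici (1 : ℝ)) := by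
  have ha0 : 0 < a := by linarith
  have hmul : StrictMonoOn (fun C => C * a) (Ici 1) := fun _ _ _ _ h =>
    mul_lt_mul_of_pos_right h ha0
  have hCa : ∀ C ∈ Ici (1 : ℝ), 1 < C * a := fun C (hC : 1 ≤ C) => by nlinarith
  constructor
  · have hT : StrictMonoOn (fun C => l (C * a) - l (C * a + a)) (Ici 1) :=
      (strictMonoOn_l_sub_l_add ha0).comp hmul fun C hC => by
        simp only [mem_Ici]; linarith [hCa C hC]
    intro x hx y hy hxy
    simpa [T, add_comm a, add_sub_assoc] using hT hx hy hxy
  · have hCa0 : ∀ C ∈ Ici (1 : ℝ), 0 < C * a := fun C hC => zero_lt_one.trans (hCa C hC)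
    refine StrictAntiOn.div_of_strictMonoOn ?_ ?_ (fun C _ => by positivity)
      (fun C hC => mul_pos (one_sub_one_div_sqrt_pos ha) (one_sub_one_div_sqrt_pos (hCa C hC)))
    · intro x hx y hy hxy
      have := strictAntiOn_one_div_sqrt (add_pos ha0 (hCa0 x hx)) (add_pos ha0 (hCa0 y hy))
        (by linarith [mul_lt_mul_of_pos_right hxy ha0])
      dsimp only at this ⊢
      linarith
    · intro x hx y hy hxy
      have := strictAntiOn_one_div_sqrt (hCa0 x hx) (hCa0 y hy) (mul_lt_mul_of_pos_right hxy ha0)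
      dsimp only at this ⊢
      exact mul_lt_mul_of_pos_left (by linarith) (one_sub_one_div_sqrt_pos ha)
end
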